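/- arXiv:1410.2642 — 2 statements merged into one kernel-verified Lean document; each statement's English description precedes it below -/
import Mathlib

section
/- A rational polyomino written as (1/m)⋃_{z∈S}(z+[0,1]²) has connected interior and connected complement if and only if S and ℤ²\S both induce connected subgraphs of the nearest-neighbour lattice ℤ² (where x,y are adjacent iff ‖x−y‖₁ = 1). -/
open Set Pointwise

/-- The closed unit square `z + [0,1]²` for `z ∈ ℤ²`, viewed in ℝ². -/
def unitSquare (z : ℤ × ℤ) : Set (ℝ × ℝ) :=
  Icc (z.1 : ℝ) ((z.1 : ℝ) + 1) ×ˢ Icc (z.2 : ℝ) ((z.2 : ℝ) + 1)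

/-- The nearest-neighbour lattice on ℤ²: `x ~ y` iff `‖x − y‖₁ = 1`. -/
def latticeGraph : SimpleGraph (ℤ × ℤ) where
  Adj x y := (x.1 - y.1).natAbs + (x.2 - y.2).natAbs = 1
  symm := by
    constructor
    intro x y h
    try dsimp only at h ⊢
    omega
  loopless := by constructor; intro x h; simp at h

/-!
Scaling by `1/m` is a homeomorphism, so it suffices to treat `Q = ⋃_{z∈S} (z + [0,1]²)`.
For `T ⊆ ℤ²` let `cellRegion T` be the set of points all of whose unit cells lie in `T`. The unit
squares form a locally finite family of closed sets, so `cellRegion T` is open; it is `interior Q`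
for `T = S` and `Qᶜ` for `T = ℤ² \ S`.

It remains to see that `cellRegion T` is connected iff `T` is lattice-connected. A lattice walk
gives a path through cell centres and edge midpoints. Conversely, "every cell of `p` is joined in
`T` to every cell of `q`" is an equivalence relation on `cellRegion T` with open classes: the cells
of a point near `p` are cells of `p`, and two cells through a common point are joined via the
cell at their corner.
-/

theorem LocallyFinite.prod {ι κ X Y : Type*} [TopologicalSpace X] [TopologicalSpace Y]
    {f : ι → Set X} {g : κ → Set Y} (hf : LocallyFinite f) (hg : LocallyFinite g) :
    LocallyFinite fun i : ι × κ => f i.1 ×ˢ g i.2 := by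
  rintro ⟨x, y⟩
  obtain ⟨U, hU, hUf⟩ := hf x
  obtain ⟨V, hV, hVg⟩ := hg y
  refine ⟨U ×ˢ V, prod_mem_nhds hU hV, (hUf.prod hVg).subset ?_⟩
  rintro ⟨i, j⟩ ⟨⟨a, b⟩, ⟨hai, hbj⟩, haU, hbV⟩
  exact ⟨⟨a, hai, haU⟩, ⟨b, hbj, hbV⟩⟩

section

variable {R : Type*}

theorem Int.eq_of_mem_Ioo_of_mem_Icc [Ring R] [LinearOrder R] [IsStrictOrderedRing R] {a b : ℤ}
    {x : R} (ha : x ∈ Ioo (a : R) (a + 1)) (hb : x ∈ Icc (b : R) (b + 1)) : b = a := by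
  have h₁ : b < a + 1 := by exact_mod_cast hb.1.trans_lt ha.2
  have h₂ : a < b + 1 := by exact_mod_cast ha.1.trans_le hb.2
  omega

theorem Int.le_add_one_of_mem_Icc [Ring R] [LinearOrder R] [IsStrictOrderedRing R] {a b : ℤ}
    {x : R} (ha : x ∈ Icc (a : R) (a + 1)) (hb : x ∈ Icc (b : R) (b + 1)) : a ≤ b + 1 := by
  exact_mod_cast ha.1.trans hb.2

theorem Int.cast_div_two_mem_Icc_iff [Field R] [LinearOrder R] [IsStrictOrderedRing R]
    {a b : ℤ} : (a : R) / 2 ∈ Icc (b : R) (b + 1) ↔ 2 * b ≤ a ∧ a ≤ 2 * b + 2 := by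
  rw [mem_Icc, le_div_iff₀ two_pos, div_le_iff₀ two_pos]
  norm_cast
  omega

end

namespace Polyomino

open Topology

theorem locallyFinite_unitSquare : LocallyFinite unitSquare :=
  have hI : LocallyFinite fun n : ℤ => Icc (n : ℝ) (n + 1) :=
    locallyFinite_Icc_of_tendsto tendsto_intCast_atTop_atTop
      (Filter.tendsto_atBot_add_const_right _ 1 (tendsto_intCast_atBot_iff.2 Filter.tendsto_id))
  hI.prod hI

theorem isClosed_biUnion_unitSquare (T : Set (ℤ × ℤ)) : IsClosed (⋃ z ∈ T, unitSquare z) := by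
  rw [biUnion_eq_iUnion]
  exact (locallyFinite_unitSquare.comp_injective Subtype.val_injective).isClosed_iUnion
    fun z => isClosed_Icc.prod isClosed_Icc

theorem mem_unitSquare_floor (p : ℝ × ℝ) : p ∈ unitSquare (⌊p.1⌋, ⌊p.2⌋) :=
  ⟨⟨Int.floor_le _, (Int.lt_floor_add_one _).le⟩, ⟨Int.floor_le _, (Int.lt_floor_add_one _).le⟩⟩

def openSquare (z : ℤ × ℤ) : Set (ℝ × ℝ) :=
  Ioo (z.1 : ℝ) ((z.1 : ℝ) + 1) ×ˢ Ioo (z.2 : ℝ) ((z.2 : ℝ) + 1)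

theorem isOpen_openSquare (z : ℤ × ℤ) : IsOpen (openSquare z) :=
  isOpen_Ioo.prod isOpen_Ioo

theorem convex_openSquare (z : ℤ × ℤ) : Convex ℝ (openSquare z) :=
  (convex_Ioo _ _).prod (convex_Ioo _ _)

theorem closure_openSquare (z : ℤ × ℤ) : closure (openSquare z) = unitSquare z := by
  rw [openSquare, closure_prod_eq, closure_Ioo (by simp), closure_Ioo (by simp), unitSquare]

theorem openSquare_subset_unitSquare (z : ℤ × ℤ) : openSquare z ⊆ unitSquare z :=
  closure_openSquare z ▸ subset_closure

theorem eq_of_mem_openSquare {z w : ℤ × ℤ} {p : ℝ × ℝ} (hz : p ∈ openSquare z)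
    (hw : p ∈ unitSquare w) : w = z :=
  Prod.ext (Int.eq_of_mem_Ioo_of_mem_Icc hz.1 hw.1) (Int.eq_of_mem_Ioo_of_mem_Icc hz.2 hw.2)

noncomputable def centre (z : ℤ × ℤ) : ℝ × ℝ := ((z.1 : ℝ) + 1 / 2, (z.2 : ℝ) + 1 / 2)

theorem centre_mem_openSquare (z : ℤ × ℤ) : centre z ∈ openSquare z := by
  refine ⟨⟨?_, ?_⟩, ⟨?_, ?_⟩⟩ <;> simp only [centre] <;> linarith

def cellRegion (T : Set (ℤ × ℤ)) : Set (ℝ × ℝ) := {p | ∀ z, p ∈ unitSquare z → z ∈ T}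

theorem compl_biUnion_unitSquare (T : Set (ℤ × ℤ)) :
    (⋃ z ∈ T, unitSquare z)ᶜ = cellRegion Tᶜ := by
  ext p
  simp only [cellRegion, mem_compl_iff, mem_iUnion₂, mem_ofPred_eq, not_exists]
  exact forall_congr' fun z => imp_not_comm

theorem isOpen_cellRegion (T : Set (ℤ × ℤ)) : IsOpen (cellRegion T) := by
  rw [← compl_compl T, ← compl_biUnion_unitSquare]
  exact (isClosed_biUnion_unitSquare _).isOpen_compl

theorem cellRegion_subset_biUnion (T : Set (ℤ × ℤ)) : cellRegion T ⊆ ⋃ z ∈ T, unitSquare z :=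
  fun p hp => mem_biUnion (hp _ (mem_unitSquare_floor p)) (mem_unitSquare_floor p)

theorem openSquare_subset_cellRegion {T : Set (ℤ × ℤ)} {z : ℤ × ℤ} (hz : z ∈ T) :
    openSquare z ⊆ cellRegion T :=
  fun _ hp _ hw => eq_of_mem_openSquare hp hw ▸ hz

theorem interior_biUnion_unitSquare (T : Set (ℤ × ℤ)) :
    interior (⋃ z ∈ T, unitSquare z) = cellRegion T := by
  refine (interior_maximal (cellRegion_subset_biUnion T) (isOpen_cellRegion T)).antisymm' ?_
  intro p hp z hpz
  rw [← closure_openSquare, mem_closure_iff] at hpz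
  obtain ⟨q, hq, hqz⟩ := hpz _ isOpen_interior hp
  obtain ⟨w, hwT, hqw⟩ := mem_iUnion₂.1 (interior_subset hq)
  exact eq_of_mem_openSquare hqz hqw ▸ hwT

variable {T : Set (ℤ × ℤ)}

theorem centre_mem_unitSquare (z : ℤ × ℤ) : centre z ∈ unitSquare z :=
  openSquare_subset_unitSquare z (centre_mem_openSquare z)

theorem centre_mem_cellRegion {z : ℤ × ℤ} (hz : z ∈ T) : centre z ∈ cellRegion T :=
  openSquare_subset_cellRegion hz (centre_mem_openSquare z)

theorem segment_centre_subset_cellRegion {p : ℝ × ℝ} {z : ℤ × ℤ} (hp : p ∈ cellRegion T)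
    (hpz : p ∈ unitSquare z) : segment ℝ p (centre z) ⊆ cellRegion T := by
  have hopen : openSegment ℝ (centre z) p ⊆ openSquare z := by
    have h := (convex_openSquare z).openSegment_interior_closure_subset_interior (x := centre z)
      (y := p)
    rw [(isOpen_openSquare z).interior_eq, closure_openSquare] at h
    exact h (centre_mem_openSquare z) hpz
  rw [← insert_endpoints_openSegment, openSegment_symm]
  exact insert_subset hp (insert_subset (centre_mem_cellRegion (hp z hpz))
    (hopen.trans (openSquare_subset_cellRegion (hp z hpz))))

theorem joinedIn_centre {p : ℝ × ℝ} {z : ℤ × ℤ} (hp : p ∈ cellRegion T)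
    (hpz : p ∈ unitSquare z) : JoinedIn (cellRegion T) p (centre z) :=
  JoinedIn.of_segment_subset (segment_centre_subset_cellRegion hp hpz)

-- Integer numerators turn membership in a unit square into an `omega` problem.
noncomputable def edgeMidpoint (z w : ℤ × ℤ) : ℝ × ℝ :=
  (((z.1 + w.1 + 1 : ℤ) : ℝ) / 2, ((z.2 + w.2 + 1 : ℤ) : ℝ) / 2)

theorem edgeMidpoint_mem_unitSquare_iff {z w v : ℤ × ℤ} :
    edgeMidpoint z w ∈ unitSquare v ↔
      (2 * v.1 ≤ z.1 + w.1 + 1 ∧ z.1 + w.1 + 1 ≤ 2 * v.1 + 2) ∧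
        (2 * v.2 ≤ z.2 + w.2 + 1 ∧ z.2 + w.2 + 1 ≤ 2 * v.2 + 2) := by
  rw [edgeMidpoint, unitSquare, mem_prod, Int.cast_div_two_mem_Icc_iff,
    Int.cast_div_two_mem_Icc_iff]

theorem joinedIn_centre_of_adj {z w : ℤ × ℤ} (hz : z ∈ T) (hw : w ∈ T)
    (hzw : latticeGraph.Adj z w) : JoinedIn (cellRegion T) (centre z) (centre w) := by
  change (z.1 - w.1).natAbs + (z.2 - w.2).natAbs = 1 at hzw
  have hmz : edgeMidpoint z w ∈ unitSquare z := edgeMidpoint_mem_unitSquare_iff.2 (by omega)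
  have hmw : edgeMidpoint z w ∈ unitSquare w := edgeMidpoint_mem_unitSquare_iff.2 (by omega)
  have hm : edgeMidpoint z w ∈ cellRegion T := by
    intro v hv
    obtain rfl | rfl : v = z ∨ v = w := by
      rw [edgeMidpoint_mem_unitSquare_iff] at hv
      rw [Prod.ext_iff, Prod.ext_iff]
      omega
    exacts [hz, hw]
  exact (joinedIn_centre hm hmz).symm.trans (joinedIn_centre hm hmw)

theorem joinedIn_centre_of_walk {a b : T} (W : (latticeGraph.induce T).Walk a b) :
    JoinedIn (cellRegion T) (centre a) (centre b) := by
  induction W with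
  | nil => exact JoinedIn.refl (centre_mem_cellRegion (Subtype.mem _))
  | cons hadj _ ih =>
    exact (joinedIn_centre_of_adj (Subtype.mem _) (Subtype.mem _) hadj).trans ih

theorem isPathConnected_cellRegion (hT : (latticeGraph.induce T).Connected) :
    IsPathConnected (cellRegion T) := by
  obtain ⟨z₀⟩ := hT.nonempty
  refine ⟨centre z₀, centre_mem_cellRegion z₀.2, fun p hp => ?_⟩
  have hpz := mem_unitSquare_floor p
  obtain ⟨W⟩ := hT.preconnected z₀ ⟨_, hp _ hpz⟩
  exact (joinedIn_centre_of_walk W).trans (joinedIn_centre hp hpz).symm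

theorem reachable_of_natAbs_add_natAbs_le_one {z w : ℤ × ℤ} (hz : z ∈ T) (hw : w ∈ T)
    (hzw : (z.1 - w.1).natAbs + (z.2 - w.2).natAbs ≤ 1) :
    (latticeGraph.induce T).Reachable ⟨z, hz⟩ ⟨w, hw⟩ := by
  rcases Nat.le_one_iff_eq_zero_or_eq_one.1 hzw with h | h
  · obtain rfl : z = w := Prod.ext (by omega) (by omega)
    rfl
  · exact SimpleGraph.Adj.reachable (G := latticeGraph.induce T) h

theorem reachable_of_mem_unitSquare {p : ℝ × ℝ} (hp : p ∈ cellRegion T) {z w : ℤ × ℤ}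
    (hz : p ∈ unitSquare z) (hw : p ∈ unitSquare w) :
    (latticeGraph.induce T).Reachable ⟨z, hp z hz⟩ ⟨w, hp w hw⟩ := by
  have hc : p ∈ unitSquare (z.1, w.2) := ⟨hz.1, hw.2⟩
  have h₁ := Int.le_add_one_of_mem_Icc hz.2 hw.2
  have h₂ := Int.le_add_one_of_mem_Icc hw.2 hz.2
  have h₃ := Int.le_add_one_of_mem_Icc hz.1 hw.1
  have h₄ := Int.le_add_one_of_mem_Icc hw.1 hz.1
  exact (reachable_of_natAbs_add_natAbs_le_one _ (hp _ hc) (by dsimp only; omega)).trans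
    (reachable_of_natAbs_add_natAbs_le_one _ _ (by dsimp only; omega))

theorem connected_of_isConnected_cellRegion (hT : IsConnected (cellRegion T)) :
    (latticeGraph.induce T).Connected := by
  let R : ℝ × ℝ → ℝ × ℝ → Prop := fun p q => ∀ z w (hz : z ∈ T) (hw : w ∈ T),
    p ∈ unitSquare z → q ∈ unitSquare w → (latticeGraph.induce T).Reachable ⟨z, hz⟩ ⟨w, hw⟩
  have hlocal : ∀ p ∈ cellRegion T, ∀ᶠ q in 𝓝[cellRegion T] p, R p q := by
    intro p hp
    have hnear : ∀ᶠ q in 𝓝 p, q ∈ cellRegion {z | p ∈ unitSquare z} :=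
      (isOpen_cellRegion _).mem_nhds fun _ => id
    filter_upwards [nhdsWithin_le_nhds hnear] with q hq z w _ _ hpz hqw
    exact reachable_of_mem_unitSquare hp hpz (hq w hqw)
  have htrans : ∀ p q r, p ∈ cellRegion T → q ∈ cellRegion T → r ∈ cellRegion T →
      R p q → R q r → R p r := by
    intro p q r _ hq _ hpq hqr z w hz hw hpz hrw
    have hc := mem_unitSquare_floor q
    exact (hpq z _ hz (hq _ hc) hpz hc).trans (hqr _ w (hq _ hc) hw hc hrw)
  have hsymm : ∀ p q, p ∈ cellRegion T → q ∈ cellRegion T → R p q → R q p :=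
    fun p q _ _ hpq z w hz hw hqz hpw => (hpq w z hw hz hpw hqz).symm
  obtain ⟨p, hp⟩ := hT.nonempty
  have : Nonempty T := ⟨⟨_, hp _ (mem_unitSquare_floor p)⟩⟩
  exact .mk fun a b => hT.isPreconnected.induction₂ R hlocal htrans hsymm
    (centre_mem_cellRegion a.2) (centre_mem_cellRegion b.2) a b a.2 b.2
    (centre_mem_unitSquare a) (centre_mem_unitSquare b)

theorem isConnected_cellRegion_iff :
    IsConnected (cellRegion T) ↔ (latticeGraph.induce T).Connected :=
  ⟨connected_of_isConnected_cellRegion, fun hT => (isPathConnected_cellRegion hT).isConnected⟩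

end Polyomino

open Polyomino in
/-- a rational polyomino `(1/m)⋃_{z∈S}(z+[0,1]²)` has connected interior
and connected complement iff `S` and `ℤ²\S` both induce connected subgraphs of the
nearest-neighbour lattice. -/
theorem simple_iff_lattice_connected (m : ℕ) (hm : 0 < m) (S : Finset (ℤ × ℤ))
    (P : Set (ℝ × ℝ)) (hP : P = (m : ℝ)⁻¹ • ⋃ z ∈ S, unitSquare z) :
    (IsConnected (interior P) ∧ IsConnected Pᶜ) ↔
      ((latticeGraph.induce (S : Set (ℤ × ℤ))).Connected ∧
        (latticeGraph.induce ((S : Set (ℤ × ℤ))ᶜ)).Connected) := by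
  let e : ℝ × ℝ ≃ₜ ℝ × ℝ := Homeomorph.smulOfNeZero ((m : ℝ)⁻¹)
    (inv_ne_zero (Nat.cast_ne_zero.2 hm.ne'))
  have hPe : P = e '' ⋃ z ∈ (S : Set (ℤ × ℤ)), unitSquare z := hP
  rw [hPe, ← e.image_interior, ← e.image_compl, e.isConnected_image, e.isConnected_image,
    interior_biUnion_unitSquare, compl_biUnion_unitSquare, isConnected_cellRegion_iff,
    isConnected_cellRegion_iff]
end

section
/- There exists a constant C such that for a Poisson random variable X with mean λ = 4^k (k ≥ 1), one has 1 − 4^{-k}·E[min(X, 4^k − 1)] ≤ C·2^{-k}. Consequently, a nonnegative random variable D satisfying P(D > 2^k√2) ≤ 1 − 4^{-k}E[min(X,4^k−1)] for all integers k ≥ 1 satisfies P(D > t) < c/t for some constant c and all t > 0. -/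
/-!
With `s = √r`, AM–GM gives the quadratic minorant `x - (x - r)² / (2s) - s/2 - 1 ≤ min x (r - 1)`
for every real `x`. Averaging it against `Poisson(r)`, whose mean and variance are both `r`, yields
`E[min(X, r - 1)] ≥ r - √r - 1`; for `r = 4^k` this bounds the defect by
`(2^k + 1) / 4^k ≤ 2 · 2^{-k}`. The tail bound follows by trapping `t` between `2^k √2` and
`2^{k+1} √2`.
-/

open ProbabilityTheory MeasureTheory
open scoped NNReal ENNReal

/-- The quantity `1 − 4^{-k}·E[min(X, 4^k − 1)]` for `X ~ Poisson(4^k)`. -/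
noncomputable def poissonDefect (k : ℕ) : ℝ :=
  1 - (4 : ℝ) ^ (-(k : ℤ)) *
    ∑' n : ℕ, min (n : ℝ) ((4 : ℝ) ^ k - 1) * poissonPMFReal ((4 : ℝ≥0) ^ k) n

open Real Nat

lemma poisson_succ_mul (r : ℝ≥0) (n : ℕ) :
    (n + 1 : ℝ) * (exp (-r) * r ^ (n + 1) / (n + 1)!) = r * (exp (-r) * r ^ n / n !) := by
  rw [factorial_succ]
  push_cast
  field_simp
  ring

lemma hasSum_mul_poisson (r : ℝ≥0) :
    HasSum (fun n : ℕ ↦ n * (exp (-r) * r ^ n / n !)) r := by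
  have h := (hasSum_one_poissonMeasure r).mul_left (r : ℝ)
  rw [mul_one, ← funext (poisson_succ_mul r)] at h
  simpa using (hasSum_nat_add_iff (f := fun n : ℕ ↦ n * (exp (-r) * r ^ n / n !)) 1).mp
    (by exact_mod_cast h)

lemma hasSum_descFactorial_two_mul_poisson (r : ℝ≥0) :
    HasSum (fun n : ℕ ↦ n * (n - 1) * (exp (-r) * r ^ n / n !)) (r ^ 2) := by
  have h := (hasSum_one_poissonMeasure r).mul_left ((r : ℝ) ^ 2)
  have shift (n : ℕ) :
      ((n + 2 : ℕ) : ℝ) * ((n + 2 : ℕ) - 1) * (exp (-r) * r ^ (n + 2) / (n + 2)!)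
        = r ^ 2 * (exp (-r) * r ^ n / n !) := by
    have h1 := poisson_succ_mul r (n + 1)
    have h0 := poisson_succ_mul r n
    push_cast at h1 ⊢
    rw [show (n : ℝ) + 2 - 1 = n + 1 by ring, show (n : ℝ) + 2 = n + 1 + 1 by ring,
      mul_comm _ ((n : ℝ) + 1), mul_assoc, h1, mul_left_comm, h0]
    ring
  rw [mul_one, ← funext shift] at h
  simpa [Finset.sum_range_succ] using (hasSum_nat_add_iff
    (f := fun n : ℕ ↦ (n : ℝ) * (n - 1) * (exp (-r) * r ^ n / n !)) 2).mp h

lemma hasSum_sub_sq_mul_poisson (r : ℝ≥0) :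
    HasSum (fun n : ℕ ↦ (n - r) ^ 2 * (exp (-r) * r ^ n / n !)) r := by
  convert ((hasSum_descFactorial_two_mul_poisson r).add
    ((hasSum_mul_poisson r).mul_left (1 - 2 * (r : ℝ)))).add
      ((hasSum_one_poissonMeasure r).mul_left ((r : ℝ) ^ 2)) using 1
  · ext n; ring
  · ring

lemma quadratic_minorant_le_min {x r s : ℝ} (hs : 0 < s) :
    x - (x - r) ^ 2 / (2 * s) - s / 2 - 1 ≤ min x (r - 1) := by
  have h : (x - r) - s / 2 ≤ (x - r) ^ 2 / (2 * s) := by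
    rw [le_div_iff₀ (by positivity)]
    nlinarith [sq_nonneg (x - r - s)]
  refine le_min ?_ (by linarith)
  have : 0 ≤ (x - r) ^ 2 / (2 * s) := by positivity
  linarith

lemma summable_min_mul_poisson (r : ℝ≥0) (m : ℝ) :
    Summable (fun n : ℕ ↦ min (n : ℝ) m * (exp (-r) * r ^ n / n !)) := by
  refine Summable.of_norm_bounded (((hasSum_mul_poisson r).add
    ((hasSum_one_poissonMeasure r).mul_left |m|)).summable) fun n ↦ ?_
  have : 0 ≤ exp (-r) * r ^ n / n ! := by positivity
  rw [norm_mul, Real.norm_of_nonneg this, ← add_mul]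
  gcongr
  exact abs_min_le_max_abs_abs.trans (max_le (by simp) (le_add_of_nonneg_left n.cast_nonneg))

lemma sub_sqrt_sub_one_le_tsum_min_mul_poisson {r : ℝ≥0} (hr : 0 < r) :
    r - √r - 1 ≤ ∑' n : ℕ, min (n : ℝ) (r - 1) * (exp (-r) * r ^ n / n !) := by
  set s := √(r : ℝ)
  have hs : 0 < s := Real.sqrt_pos.mpr (by exact_mod_cast hr)
  have hs2 : s ^ 2 = r := Real.sq_sqrt r.2
  have minorant := (((hasSum_mul_poisson r).sub
    ((hasSum_sub_sq_mul_poisson r).div_const (2 * s))).sub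
      ((hasSum_one_poissonMeasure r).mul_left (s / 2 + 1)))
  have hsum : (r : ℝ) - r / (2 * s) - (s / 2 + 1) * 1 = r - s - 1 := by
    rw [← hs2]; field_simp; ring
  rw [hsum] at minorant
  rw [← minorant.tsum_eq]
  refine minorant.summable.tsum_le_tsum (fun n ↦ ?_) (summable_min_mul_poisson r _)
  have := quadratic_minorant_le_min (x := n) (r := r) hs
  calc _ = (n - (n - r) ^ 2 / (2 * s) - s / 2 - 1) * (exp (-r) * r ^ n / n !) := by ring
    _ ≤ _ := by gcongr

lemma poissonDefect_le (k : ℕ) : poissonDefect k ≤ 2 * (2 : ℝ) ^ (-(k : ℤ)) := by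
  have h4 : (4 : ℝ) ^ k = (2 ^ k) ^ 2 := by rw [← pow_mul, mul_comm, pow_mul]; norm_num
  have hs : (1 : ℝ) ≤ 2 ^ k := one_le_pow₀ one_le_two
  unfold poissonDefect
  set E := ∑' n : ℕ, min (n : ℝ) (4 ^ k - 1) * _
  have hE : (2 ^ k) ^ 2 - 2 ^ k - 1 ≤ E := by
    convert sub_sqrt_sub_one_le_tsum_min_mul_poisson (r := 4 ^ k) (by positivity) using 1
    · push_cast
      rw [h4, Real.sqrt_sq (by positivity)]
    · push_cast
      rfl
  rw [zpow_neg, zpow_neg, zpow_natCast, zpow_natCast, h4]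
  generalize (2 : ℝ) ^ k = s at hE hs
  rw [sub_le_comm]
  calc 1 - 2 * s⁻¹ ≤ (s ^ 2)⁻¹ * (s ^ 2 - s - 1) := by
        field_simp
        linarith
    _ ≤ (s ^ 2)⁻¹ * E := by gcongr

lemma exists_two_pow_mul_le_lt {a t : ℝ} (ha : 0 < a) (ht : 2 * a ≤ t) :
    ∃ k : ℕ, 1 ≤ k ∧ 2 ^ k * a ≤ t ∧ t < 2 ^ (k + 1) * a := by
  obtain ⟨k, hk, hk'⟩ := exists_nat_pow_near (x := t / a) (y := 2)
    (by rw [le_div_iff₀ ha]; linarith) one_lt_two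
  rw [le_div_iff₀ ha] at hk
  rw [div_lt_iff₀ ha] at hk'
  refine ⟨k, ?_, hk, hk'⟩
  by_contra! h0
  simp only [Nat.lt_one_iff.mp h0, zero_add, pow_one] at hk'
  linarith

lemma exists_meas_lt_div_of_dyadic_tail_le {Ω : Type*} [MeasurableSpace Ω] (μ : Measure Ω)
    [IsProbabilityMeasure μ] (D : Ω → ℝ≥0∞) {a C : ℝ} (ha : 0 < a) (hC : 0 ≤ C)
    (h : ∀ k : ℕ, 1 ≤ k →
      μ {ω | ENNReal.ofReal (2 ^ k * a) < D ω} ≤ ENNReal.ofReal (C * 2 ^ (-(k : ℤ)))) :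
    ∃ c : ℝ, 0 < c ∧ ∀ t : ℝ, 0 < t → μ {ω | ENNReal.ofReal t < D ω} < ENNReal.ofReal (c / t) := by
  refine ⟨2 * a * (C + 1), by positivity, fun t ht ↦ ?_⟩
  rcases lt_or_ge t (2 * a) with hsmall | hlarge
  · calc μ {ω | ENNReal.ofReal t < D ω} ≤ ENNReal.ofReal 1 := by simpa using prob_le_one
      _ < ENNReal.ofReal (2 * a * (C + 1) / t) := by
        rw [ENNReal.ofReal_lt_ofReal_iff (by positivity), one_lt_div ht]
        nlinarith
  · obtain ⟨k, hk, hkt, htk⟩ := exists_two_pow_mul_le_lt ha hlarge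
    calc μ {ω | ENNReal.ofReal t < D ω}
        ≤ μ {ω | ENNReal.ofReal (2 ^ k * a) < D ω} :=
          measure_mono fun ω hω ↦ (ENNReal.ofReal_le_ofReal hkt).trans_lt hω
      _ ≤ ENNReal.ofReal (C * 2 ^ (-(k : ℤ))) := h k hk
      _ < ENNReal.ofReal (2 * a * (C + 1) / t) := by
        rw [ENNReal.ofReal_lt_ofReal_iff (by positivity), zpow_neg, zpow_natCast,
          lt_div_iff₀ ht]
        have hscaled : (2 ^ k)⁻¹ * t < 2 * a := by
          rw [inv_mul_lt_iff₀ (by positivity)]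
          rwa [pow_succ, mul_assoc] at htk
        nlinarith

/-- `1 − 4^{-k}·E[min(X, 4^k − 1)] ≤ C·2^{-k}` for a constant `C`, and
consequently any nonnegative (possibly infinite) random variable `D` with
`P(D > 2^k√2) ≤ 1 − 4^{-k}·E[min(X, 4^k − 1)]` for all `k ≥ 1` satisfies
`P(D > t) < c/t` for some constant `c` and all `t > 0`. -/
theorem poisson_defect_bound_and_tail :
    (∃ C : ℝ, ∀ k : ℕ, 1 ≤ k → poissonDefect k ≤ C * (2 : ℝ) ^ (-(k : ℤ))) ∧
    ∀ (Ω : Type) (_ : MeasurableSpace Ω) (μ : Measure Ω), IsProbabilityMeasure μ →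
      ∀ D : Ω → ℝ≥0∞,
        (∀ k : ℕ, 1 ≤ k →
          μ {ω | ENNReal.ofReal ((2 : ℝ) ^ k * Real.sqrt 2) < D ω} ≤
            ENNReal.ofReal (poissonDefect k)) →
        ∃ c : ℝ, 0 < c ∧ ∀ t : ℝ, 0 < t →
          μ {ω | ENNReal.ofReal t < D ω} < ENNReal.ofReal (c / t) := by
  refine ⟨⟨2, fun k _ ↦ poissonDefect_le k⟩, fun Ω _ μ _ D hD ↦ ?_⟩
  exact exists_meas_lt_div_of_dyadic_tail_le μ D (by positivity) zero_le_two fun k hk ↦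
    (hD k hk).trans (ENNReal.ofReal_le_ofReal (poissonDefect_le k))
end
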